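/- arXiv:1805.07474 — 4 statements merged into one kernel-verified Lean document; each statement's English description precedes it below -/
import Mathlib

section
/- For every real t ≥ 3, 3(1 + 1/t)^(2/5) - 2(1 + 1/t)^(1/5) - (8/5) t^(-3/5) ≥ 0. -/
/-!
With `x = (1 + 1/t)^(1/5) ≥ 1` the first two terms are `3x² - 2x = x(3x - 2) ≥ 1`, while
`t^(3/5) ≥ 3^(3/5) ≥ 8/5` because `(8/5)^5 ≤ 3^3`, so the last term is at most `1`.
-/

open Real

lemma rpow_two_fifths_eq_sq {b : ℝ} (hb : 0 ≤ b) :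
    b ^ ((2:ℝ)/5) = (b ^ ((1:ℝ)/5)) ^ 2 := by
  rw [← rpow_mul_natCast hb]
  norm_num

lemma eight_fifths_le_rpow_three_fifths {t : ℝ} (ht : 3 ≤ t) : (8/5:ℝ) ≤ t ^ ((3:ℝ)/5) := by
  have ht0 : 0 ≤ t := by linarith
  have hpow : ((8/5:ℝ) ^ 5) ≤ t ^ 3 :=
    calc ((8/5:ℝ) ^ 5) ≤ 3 ^ 3 := by norm_num
      _ ≤ t ^ 3 := by gcongr
  calc (8/5:ℝ) = ((8/5:ℝ) ^ 5) ^ ((5:ℕ)⁻¹ : ℝ) := (pow_rpow_inv_natCast (by norm_num) (by norm_num)).symm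
    _ ≤ (t ^ 3) ^ ((5:ℕ)⁻¹ : ℝ) := by gcongr
    _ = t ^ ((3:ℝ)/5) := by
      rw [← rpow_natCast_mul ht0]
      norm_num [div_eq_mul_inv]

lemma eight_fifths_mul_rpow_neg_three_fifths_le_one {t : ℝ} (ht : 3 ≤ t) :
    (8/5) * t ^ (-(3:ℝ)/5) ≤ 1 := by
  have hpos : 0 < t ^ ((3:ℝ)/5) := by positivity
  rw [neg_div, rpow_neg (by linarith), ← div_eq_mul_inv, div_le_one hpos]
  exact eight_fifths_le_rpow_three_fifths ht

theorem stmt_1 (t : ℝ) (ht : 3 ≤ t) :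
    3 * (1 + 1/t) ^ ((2:ℝ)/5) - 2 * (1 + 1/t) ^ ((1:ℝ)/5)
      - (8/5) * t ^ (-(3:ℝ)/5) ≥ 0 := by
  have hb : 1 ≤ 1 + 1/t := le_add_of_nonneg_right (by positivity)
  have hx : 1 ≤ (1 + 1/t) ^ ((1:ℝ)/5) := one_le_rpow hb (by norm_num)
  rw [rpow_two_fifths_eq_sq (by linarith)]
  nlinarith [eight_fifths_mul_rpow_neg_three_fifths_le_one ht]
end

section
/- For every natural number t ≥ 1, with σ_s := s^(-2/5), one has (2σ_{t+1} - 2σ_t + (3/2)σ_t²) / √(2 σ_{t+1}) ≥ (1/√2) t^(-3/5). -/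
/-! Write `t = u ^ 5` with `u ≥ 1`, so that `σ_t = u⁻²` and `t^(-3/5) = u⁻³`. Since
`√σ_{t+1} ≤ √σ_t = u⁻¹`, the right-hand side times `√(2σ_{t+1})` is at most `σ_t²`, and the
claim reduces to `σ_t - σ_t² / 4 ≤ σ_{t+1}`. Raised to the fifth power this is the polynomial
inequality `(4u² - 1)⁵ (u⁵ + 1)² ≤ 1024 u²⁰` for `u ≥ 1`, whose difference has only positive
coefficients as a polynomial in `u - 1`. -/

lemma four_sq_sub_one_pow_five_mul_le {u : ℝ} (hu : 1 ≤ u) :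
    (4 * u ^ 2 - 1) ^ 5 * (u ^ 5 + 1) ^ 2 ≤ 1024 * u ^ 20 := by
  obtain ⟨v, hv, rfl⟩ : ∃ v : ℝ, 0 ≤ v ∧ u = 1 + v := ⟨u - 1, by linarith, by ring⟩
  rw [← sub_nonneg]
  ring_nf
  positivity

lemma pow_rpow_intCast_div {u : ℝ} (hu : 0 ≤ u) {n : ℕ} (hn : n ≠ 0) (k : ℤ) :
    (u ^ n) ^ ((k : ℝ) / n) = u ^ k := by
  rw [← Real.rpow_natCast_mul hu, mul_div_cancel₀ _ (Nat.cast_ne_zero.2 hn), Real.rpow_intCast]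

section

variable {u : ℝ}

lemma zpow_neg_two_sub_sq_div_four_le (hu : 1 ≤ u) :
    u ^ (-2 : ℤ) - (u ^ (-2 : ℤ)) ^ 2 / 4 ≤ (u ^ 5 + 1) ^ (-(2 : ℝ) / 5) := by
  have hu0 : 0 < u := by linarith
  have hlhs : u ^ (-2 : ℤ) - (u ^ (-2 : ℤ)) ^ 2 / 4 = (4 * u ^ 2 - 1) / (4 * u ^ 4) := by
    simp only [zpow_neg, zpow_ofNat]
    field_simp
  have hrhs : ((u ^ 5 + 1) ^ (-(2 : ℝ) / 5)) ^ 5 = ((u ^ 5 + 1) ^ 2)⁻¹ := by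
    rw [← Real.rpow_mul_natCast (by positivity)]
    norm_num [Real.rpow_neg (by positivity : (0 : ℝ) ≤ u ^ 5 + 1)]
  refine le_of_pow_le_pow_left₀ (n := 5) (by norm_num) (by positivity) ?_
  rw [hlhs, hrhs, div_pow, div_le_iff₀ (by positivity), inv_mul_eq_div,
    le_div_iff₀ (by positivity)]
  linarith [four_sq_sub_one_pow_five_mul_le hu]

lemma zpow_neg_three_mul_sqrt_le (hu : 1 ≤ u) :
    u ^ (-3 : ℤ) * √((u ^ 5 + 1) ^ (-(2 : ℝ) / 5)) ≤ (u ^ (-2 : ℤ)) ^ 2 := by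
  have hu0 : 0 < u := by linarith
  have hsqrt : √((u ^ 5 + 1) ^ (-(2 : ℝ) / 5)) ≤ u ^ (-1 : ℤ) := by
    refine Real.sqrt_le_iff.2 ⟨by positivity, ?_⟩
    calc (u ^ 5 + 1) ^ (-(2 : ℝ) / 5)
        ≤ (u ^ 5) ^ (-(2 : ℝ) / 5) :=
          Real.rpow_le_rpow_of_nonpos (by positivity) (by linarith) (by norm_num)
      _ = u ^ (-2 : ℤ) := by rw [← pow_rpow_intCast_div hu0.le (n := 5) (by norm_num)]; norm_num
      _ = (u ^ (-1 : ℤ)) ^ 2 := by rw [← zpow_natCast, ← zpow_mul]; norm_num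
  calc u ^ (-3 : ℤ) * √((u ^ 5 + 1) ^ (-(2 : ℝ) / 5))
      ≤ u ^ (-3 : ℤ) * u ^ (-1 : ℤ) := by gcongr
    _ = (u ^ (-2 : ℤ)) ^ 2 := by rw [← zpow_add₀ hu0.ne', ← zpow_natCast, ← zpow_mul]; norm_num

end

lemma div_sqrt_two_mul_ge_of_sub_sq_div_four_le {S a c : ℝ} (hS : 0 < S)
    (hcS : c * √S ≤ a ^ 2) (hS_ge : a - a ^ 2 / 4 ≤ S) :
    (2 * S - 2 * a + 3 / 2 * a ^ 2) / √(2 * S) ≥ 1 / √2 * c := by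
  rw [ge_iff_le, Real.sqrt_mul zero_le_two, ← div_div, le_div_iff₀ (Real.sqrt_pos.2 hS),
    one_div_mul_eq_div, div_mul_eq_mul_div, div_le_div_iff_of_pos_right (by positivity)]
  linarith

theorem stmt_3 (t : ℕ) (ht : 1 ≤ t)
    (σ : ℕ → ℝ) (hσ : ∀ s : ℕ, σ s = (s : ℝ) ^ (-(2:ℝ)/5)) :
    (2 * σ (t+1) - 2 * σ t + (3/2) * (σ t)^2) / Real.sqrt (2 * σ (t+1))
      ≥ (1 / Real.sqrt 2) * (t : ℝ) ^ (-(3:ℝ)/5) := by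
  have ht1 : (1 : ℝ) ≤ t := by exact_mod_cast ht
  obtain ⟨u, hu1, htu⟩ : ∃ u : ℝ, 1 ≤ u ∧ (t : ℝ) = u ^ 5 :=
    ⟨(t : ℝ) ^ (1 / 5 : ℝ), Real.one_le_rpow ht1 (by norm_num), by
      rw [← Real.rpow_natCast, ← Real.rpow_mul (by linarith)]; norm_num⟩
  have hσt : σ t = u ^ (-2 : ℤ) := by
    rw [hσ, htu, ← pow_rpow_intCast_div (by linarith) (n := 5) (by norm_num)]
    norm_num
  have hσt1 : σ (t + 1) = (u ^ 5 + 1) ^ (-(2 : ℝ) / 5) := by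
    rw [hσ, Nat.cast_succ, htu]
  have ht_rpow : (t : ℝ) ^ (-(3 : ℝ) / 5) = u ^ (-3 : ℤ) := by
    rw [htu, ← pow_rpow_intCast_div (by linarith) (n := 5) (by norm_num)]
    norm_num
  rw [ht_rpow, hσt, hσt1]
  exact div_sqrt_two_mul_ge_of_sub_sq_div_four_le (by positivity)
    (zpow_neg_three_mul_sqrt_le hu1) (zpow_neg_two_sub_sq_div_four_le hu1)
end

section
/- Let K ⊆ ℝ^n be a compact convex set, η > 0, x₁ ∈ K, g₁,…,g_T ∈ ℝ^n, and define F_t(x) = η ∑_{τ=1}^{t-1} gᵀ_τ x + ‖x - x₁‖². Let x*_t be a minimizer of F_t over K. Then for every t, g_tᵀ (x*_t - x*_{t+1}) ≤ 2η ‖g_t‖². -/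
/-!
Write `F_t x = ⟪v_t, x⟫ + ‖x - x₁‖²` with `v_t = η ∑_{τ < t} g_τ`. Since the regularizer is
strongly convex, comparing a minimizer `a` over the convex set `K` with the midpoint of `a` and any
`b ∈ K` gives `F_t a + ‖a - b‖² / 2 ≤ F_t b`. Adding this inequality for the minimizers of two such
objectives with linear parts `v` and `v'` yields `‖a - b‖² ≤ ⟪v' - v, a - b⟫`, so the minimizer is
`1`-Lipschitz in the linear part. As `v_{t+1} - v_t = η g_t`, Cauchy–Schwarz finishes the proof.
-/

open Finset RealInnerProductSpace

section QuadraticRegularizer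

variable {E : Type*} [NormedAddCommGroup E] [InnerProductSpace ℝ E]

lemma norm_midpoint_sub_sq (a b c : E) :
    ‖midpoint ℝ a b - c‖ ^ 2 = (‖a - c‖ ^ 2 + ‖b - c‖ ^ 2) / 2 - ‖a - b‖ ^ 2 / 4 := by
  have hmid : midpoint ℝ a b - c = (2 : ℝ)⁻¹ • ((a - c) + (b - c)) := by
    rw [midpoint_eq_smul_add, invOf_eq_inv]; module
  have hpar := parallelogram_law_with_norm ℝ (a - c) (b - c)
  rw [sub_sub_sub_cancel_right] at hpar
  rw [hmid, norm_smul, mul_pow]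
  norm_num
  linarith

lemma inner_midpoint_right (v a b : E) :
    ⟪v, midpoint ℝ a b⟫ = (⟪v, a⟫ + ⟪v, b⟫) / 2 := by
  rw [midpoint_eq_smul_add, invOf_eq_inv, inner_smul_right, inner_add_right]
  norm_num
  ring

lemma IsMinOn.inner_add_norm_sub_sq_add_half_le {K : Set E} (hK : Convex ℝ K) {v c a b : E}
    (ha : a ∈ K) (hb : b ∈ K) (hmin : IsMinOn (fun x ↦ ⟪v, x⟫ + ‖x - c‖ ^ 2) K a) :
    ⟪v, a⟫ + ‖a - c‖ ^ 2 + ‖a - b‖ ^ 2 / 2 ≤ ⟪v, b⟫ + ‖b - c‖ ^ 2 := by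
  have hmid := isMinOn_iff.mp hmin _ (hK.midpoint_mem ha hb)
  simp only [inner_midpoint_right, norm_midpoint_sub_sq] at hmid
  linarith

lemma IsMinOn.norm_sub_le_of_inner_add_norm_sub_sq {K : Set E} (hK : Convex ℝ K) {v v' c a b : E}
    (ha : a ∈ K) (hb : b ∈ K) (hmin : IsMinOn (fun x ↦ ⟪v, x⟫ + ‖x - c‖ ^ 2) K a)
    (hmin' : IsMinOn (fun x ↦ ⟪v', x⟫ + ‖x - c‖ ^ 2) K b) :
    ‖a - b‖ ≤ ‖v - v'‖ := by
  have hab := hmin.inner_add_norm_sub_sq_add_half_le hK ha hb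
  have hba := hmin'.inner_add_norm_sub_sq_add_half_le hK hb ha
  have hsq : ‖a - b‖ ^ 2 ≤ ‖v - v'‖ * ‖a - b‖ := by
    have hcs := real_inner_le_norm (v' - v) (a - b)
    rw [norm_sub_rev b a, inner_sub_left, inner_sub_right, inner_sub_right, norm_sub_rev v'] at *
    linarith
  rcases (norm_nonneg (a - b)).eq_or_lt with h | h
  · rw [← h]; exact norm_nonneg _
  · nlinarith

end QuadraticRegularizer

theorem stmt_9_general (n T : ℕ) (K : Set (EuclideanSpace ℝ (Fin n)))
    (hK : Convex ℝ K)
    (η : ℝ) (hη : 0 < η) (x₁ : EuclideanSpace ℝ (Fin n))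
    (g : ℕ → EuclideanSpace ℝ (Fin n))
    (F : ℕ → EuclideanSpace ℝ (Fin n) → ℝ)
    (hF : ∀ t, ∀ x, F t x =
      η * ∑ τ ∈ Finset.Icc 1 (t - 1), (inner ℝ (g τ) x : ℝ) + ‖x - x₁‖ ^ 2)
    (xs : ℕ → EuclideanSpace ℝ (Fin n))
    (hxs : ∀ t, xs t ∈ K ∧ ∀ y ∈ K, F t (xs t) ≤ F t y) :
    ∀ t ∈ Finset.Icc 1 T, (inner ℝ (g t) (xs t - xs (t + 1)) : ℝ) ≤ 2 * η * ‖g t‖ ^ 2 := by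
  intro t ht
  obtain ⟨s, rfl⟩ : ∃ s, t = s + 1 := ⟨t - 1, by grind⟩
  set v : ℕ → EuclideanSpace ℝ (Fin n) := fun t ↦ η • ∑ τ ∈ Icc 1 (t - 1), g τ
  have hmin : ∀ t, IsMinOn (fun x ↦ ⟪v t, x⟫ + ‖x - x₁‖ ^ 2) K (xs t) := fun t ↦
    isMinOn_iff.mpr fun y hy ↦ by
      simpa only [v, inner_smul_left, sum_inner, hF, RCLike.conj_to_real]
        using (hxs t).2 y hy
  have hstep : v (s + 1) - v (s + 1 + 1) = -(η • g (s + 1)) := by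
    simp only [v, Nat.add_sub_cancel, sum_Icc_succ_top (Nat.le_add_left 1 s), smul_add]
    abel
  have hdist :=
    (hmin (s + 1)).norm_sub_le_of_inner_add_norm_sub_sq hK (hxs _).1 (hxs _).1 (hmin (s + 1 + 1))
  rw [hstep, norm_neg, norm_smul, Real.norm_of_nonneg hη.le] at hdist
  calc ⟪g (s + 1), xs (s + 1) - xs (s + 1 + 1)⟫
      ≤ ‖g (s + 1)‖ * ‖xs (s + 1) - xs (s + 1 + 1)‖ := real_inner_le_norm _ _
    _ ≤ ‖g (s + 1)‖ * (η * ‖g (s + 1)‖) := by gcongr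
    _ ≤ 2 * η * ‖g (s + 1)‖ ^ 2 := by nlinarith [norm_nonneg (g (s + 1))]

theorem stmt_9 (n T : ℕ) (K : Set (EuclideanSpace ℝ (Fin n)))
    (hKc : IsCompact K) (hK : Convex ℝ K)
    (η : ℝ) (hη : 0 < η) (x₁ : EuclideanSpace ℝ (Fin n)) (hx₁ : x₁ ∈ K)
    (g : ℕ → EuclideanSpace ℝ (Fin n))
    (F : ℕ → EuclideanSpace ℝ (Fin n) → ℝ)
    (hF : ∀ t, ∀ x, F t x =
      η * ∑ τ ∈ Finset.Icc 1 (t - 1), (inner ℝ (g τ) x : ℝ) + ‖x - x₁‖ ^ 2)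
    (xs : ℕ → EuclideanSpace ℝ (Fin n))
    (hxs : ∀ t, xs t ∈ K ∧ ∀ y ∈ K, F t (xs t) ≤ F t y) :
    ∀ t ∈ Finset.Icc 1 T, (inner ℝ (g t) (xs t - xs (t + 1)) : ℝ) ≤ 2 * η * ‖g t‖ ^ 2 :=
  stmt_9_general n T K hK η hη x₁ g F hF xs hxs
end

section
/- Let f : ℝ^n → ℝ be continuously differentiable and δ > 0. Then the gradient of the δ-smoothed function f̂_δ(x) = E_{v∼B^n}[f(x + δv)] satisfies ∇f̂_δ(x) = E_{u∼S^n}[(n/δ) f(x + δu) u], where u is uniform on the unit sphere. -/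
/-!
Differentiating under the integral sign, `∇f̂_δ(x)` is the ball average of `∇f(x + δv)`, so
with `g = f(x + δ ·)` the claim is the divergence theorem `∫_B ∂ₑg = ∫_S g(u) ⟪u, e⟫ dσ`,
where `σ = μ.toSphere` has total mass `n · μ(B)`. To prove it, integrate `∂ₑg` by parts against
smooth cutoffs `χ_ε` that equal `1` on `B` and vanish outside radius `√(1 + ε)`. As `ε → 0` the
left side tends to `∫_B ∂ₑg`. In polar coordinates the boundary term `-∫ (∂ₑχ_ε) g` averages
`r ↦ rⁿ⁻¹ g(ru) ⟪u, e⟫` against radial weights of unit mass concentrating at `r = 1`.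
-/

open MeasureTheory Metric Set Filter Module
open scoped Topology RealInnerProductSpace

theorem abs_integral_mul_sub_le_of_integral_eq_one {α : Type*} [MeasurableSpace α]
    {μ : Measure α} {φ Q : α → ℝ} {c η : ℝ} (hφ : Integrable φ μ)
    (hφQ : Integrable (fun r ↦ φ r * Q r) μ) (hφ_nonneg : ∀ᵐ r ∂μ, 0 ≤ φ r)
    (hφ_one : ∫ r, φ r ∂μ = 1) (hQ : ∀ᵐ r ∂μ, φ r ≠ 0 → |Q r - c| ≤ η) :
    |∫ r, φ r * Q r ∂μ - c| ≤ η := by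
  have hsub : ∫ r, φ r * Q r ∂μ - c = ∫ r, φ r * (Q r - c) ∂μ := by
    simp_rw [mul_sub]
    rw [integral_sub hφQ (hφ.mul_const c), integral_mul_const, hφ_one, one_mul]
  calc |∫ r, φ r * Q r ∂μ - c| = ‖∫ r, φ r * (Q r - c) ∂μ‖ := by rw [hsub, Real.norm_eq_abs]
    _ ≤ ∫ r, η * φ r ∂μ := by
      refine norm_integral_le_of_norm_le (hφ.const_mul η) ?_
      filter_upwards [hφ_nonneg, hQ] with r h0 hr
      rcases eq_or_ne (φ r) 0 with h | h
      · simp [h]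
      · rw [norm_mul, Real.norm_of_nonneg h0, Real.norm_eq_abs, mul_comm]
        exact mul_le_mul_of_nonneg_right (hr h) h0
    _ = η := by rw [integral_const_mul, hφ_one, mul_one]

-- A step in the squared radius `s = ‖v‖ ^ 2`, so that `v ↦ radialStep ε (‖v‖ ^ 2)` is smooth.
noncomputable def radialStep (ε s : ℝ) : ℝ := Real.smoothTransition ((s - 1) / ε)

noncomputable def radialWeight (ε r : ℝ) : ℝ := 2 * r * deriv (radialStep ε) (r ^ 2)

section RadialStep

variable {ε : ℝ}

theorem contDiff_radialStep {k : ℕ∞} : ContDiff ℝ k (radialStep ε) :=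
  Real.smoothTransition.contDiff.comp ((contDiff_id.sub contDiff_const).div_const ε)

theorem radialStep_of_le_one (hε : 0 ≤ ε) {s : ℝ} (hs : s ≤ 1) : radialStep ε s = 0 :=
  Real.smoothTransition.zero_of_nonpos (div_nonpos_of_nonpos_of_nonneg (by linarith) hε)

theorem radialStep_of_one_add_le (hε : 0 < ε) {s : ℝ} (hs : 1 + ε ≤ s) : radialStep ε s = 1 :=
  Real.smoothTransition.one_of_one_le ((one_le_div hε).2 (by linarith))

theorem radialStep_nonneg (s : ℝ) : 0 ≤ radialStep ε s := Real.smoothTransition.nonneg _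

theorem radialStep_le_one (s : ℝ) : radialStep ε s ≤ 1 := Real.smoothTransition.le_one _

theorem deriv_radialStep_nonneg (hε : 0 ≤ ε) (s : ℝ) : 0 ≤ deriv (radialStep ε) s :=
  Monotone.deriv_nonneg fun _ _ h ↦
    Real.smoothTransition.monotone (div_le_div_of_nonneg_right (by linarith) hε)

theorem mem_Icc_of_deriv_radialStep_ne_zero (hε : 0 < ε) {s : ℝ}
    (hs : deriv (radialStep ε) s ≠ 0) : s ∈ Icc 1 (1 + ε) := by
  by_contra hs'
  rcases not_and_or.1 hs' with h | h <;> rw [not_le] at h <;> apply hs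
  · have : radialStep ε =ᶠ[𝓝 s] fun _ ↦ 0 := by
      filter_upwards [Iio_mem_nhds h] with t ht using radialStep_of_le_one hε.le ht.le
    simp [this.deriv_eq]
  · have : radialStep ε =ᶠ[𝓝 s] fun _ ↦ 1 := by
      filter_upwards [Ioi_mem_nhds h] with t ht using radialStep_of_one_add_le hε ht.le
    simp [this.deriv_eq]

end RadialStep

section RadialWeight

variable {ε : ℝ}

theorem hasDerivAt_radialStep_sq (r : ℝ) :
    HasDerivAt (fun r ↦ radialStep ε (r ^ 2)) (radialWeight ε r) r := by
  have hd := (contDiff_radialStep (ε := ε) (k := 1)).differentiable one_ne_zero (r ^ 2)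
  refine (hd.hasDerivAt.comp (h := fun r : ℝ ↦ r ^ 2) r (hasDerivAt_pow 2 r)).congr_deriv ?_
  simp only [radialWeight, Nat.cast_ofNat]
  ring

theorem continuous_deriv_radialStep : Continuous (deriv (radialStep ε)) :=
  (contDiff_radialStep (k := 1)).continuous_deriv le_rfl

theorem continuous_radialWeight : Continuous (radialWeight ε) :=
  continuous_const.mul continuous_id |>.mul <| continuous_deriv_radialStep.comp (continuous_pow 2)

theorem radialWeight_nonneg (hε : 0 ≤ ε) {r : ℝ} (hr : 0 ≤ r) : 0 ≤ radialWeight ε r :=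
  mul_nonneg (by positivity) (deriv_radialStep_nonneg hε _)

theorem mem_Icc_of_radialWeight_ne_zero (hε : 0 < ε) {r : ℝ} (hr : 0 ≤ r)
    (hw : radialWeight ε r ≠ 0) : r ∈ Icc 1 (1 + ε) := by
  obtain ⟨h1, h2⟩ := mem_Icc_of_deriv_radialStep_ne_zero hε (right_ne_zero_of_mul hw)
  constructor <;> nlinarith

theorem hasCompactSupport_radialWeight (hε : 0 < ε) : HasCompactSupport (radialWeight ε) := by
  refine HasCompactSupport.intro (isCompact_closedBall 0 (1 + ε)) fun r hr ↦ ?_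
  by_contra hw
  obtain ⟨h1, h2⟩ := mem_Icc_of_deriv_radialStep_ne_zero hε (right_ne_zero_of_mul hw)
  rw [mem_closedBall, dist_zero_right, Real.norm_eq_abs, not_le] at hr
  nlinarith [sq_abs r]

theorem integrable_radialWeight (hε : 0 < ε) : Integrable (radialWeight ε) :=
  continuous_radialWeight.integrable_of_hasCompactSupport (hasCompactSupport_radialWeight hε)

theorem integral_Ioi_radialWeight (hε : 0 < ε) : ∫ r in Ioi 0, radialWeight ε r = 1 := by
  have hlim : Tendsto (fun r : ℝ ↦ radialStep ε (r ^ 2)) atTop (𝓝 1) := by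
    refine tendsto_const_nhds.congr' ?_
    filter_upwards [eventually_ge_atTop (1 + ε)] with r hr
    exact (radialStep_of_one_add_le hε (by nlinarith)).symm
  rw [integral_Ioi_of_hasDerivAt_of_tendsto
    (hasDerivAt_radialStep_sq 0).continuousAt.continuousWithinAt
    (fun r _ ↦ hasDerivAt_radialStep_sq r)
    (integrable_radialWeight hε).integrableOn hlim]
  simp [radialStep_of_le_one hε.le]

theorem integrableOn_radialWeight_mul (hε : 0 < ε) {Q : ℝ → ℝ} (hQ : Continuous Q) (s : Set ℝ) :
    IntegrableOn (fun r ↦ radialWeight ε r * Q r) s :=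
  (continuous_radialWeight.mul hQ).integrable_of_hasCompactSupport
    ((hasCompactSupport_radialWeight hε).mul_right) |>.integrableOn

theorem abs_setIntegral_radialWeight_mul_sub_le (hε : 0 < ε) {Q : ℝ → ℝ} (hQ : Continuous Q)
    {c η : ℝ} (hQc : ∀ r ∈ Icc 1 (1 + ε), |Q r - c| ≤ η) :
    |(∫ r in Ioi 0, radialWeight ε r * Q r) - c| ≤ η := by
  refine abs_integral_mul_sub_le_of_integral_eq_one
    (integrable_radialWeight hε).integrableOn
    (integrableOn_radialWeight_mul hε hQ _) ?_ (integral_Ioi_radialWeight hε) ?_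
  all_goals filter_upwards [ae_restrict_mem measurableSet_Ioi] with r hr
  · exact radialWeight_nonneg hε.le hr.le
  · exact fun hw ↦ hQc r (mem_Icc_of_radialWeight_ne_zero hε hr.le hw)

theorem tendsto_setIntegral_radialWeight_mul {Q : ℝ → ℝ} (hQ : Continuous Q) :
    Tendsto (fun ε ↦ ∫ r in Ioi 0, radialWeight ε r * Q r) (𝓝[>] 0) (𝓝 (Q 1)) := by
  refine Metric.tendsto_nhds.2 fun η hη ↦ ?_
  obtain ⟨δ, hδ, hQδ⟩ := Metric.continuousAt_iff.1 hQ.continuousAt (η / 2) (half_pos hη)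
  filter_upwards [Ioo_mem_nhdsGT hδ] with ε ⟨hε, hεδ⟩
  rw [Real.dist_eq]
  refine (abs_setIntegral_radialWeight_mul_sub_le hε hQ fun r hr ↦ ?_).trans_lt (half_lt_self hη)
  refine (hQδ ?_).le
  rw [Real.dist_eq, abs_of_nonneg (by linarith [hr.1])]
  linarith [hr.2]

end RadialWeight

section BallCutoff

variable {E : Type*} [NormedAddCommGroup E] {ε : ℝ}

noncomputable def ballCutoff (ε : ℝ) (v : E) : ℝ := 1 - radialStep ε (‖v‖ ^ 2)

theorem ballCutoff_of_norm_le_one (hε : 0 ≤ ε) {v : E} (hv : ‖v‖ ≤ 1) : ballCutoff ε v = 1 := by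
  rw [ballCutoff, radialStep_of_le_one hε (pow_le_one₀ (norm_nonneg v) hv), sub_zero]

theorem ballCutoff_of_one_add_le (hε : 0 < ε) {v : E} (hv : 1 + ε ≤ ‖v‖ ^ 2) :
    ballCutoff ε v = 0 := by
  rw [ballCutoff, radialStep_of_one_add_le hε hv, sub_self]

theorem ballCutoff_nonneg (v : E) : 0 ≤ ballCutoff ε v := sub_nonneg.2 (radialStep_le_one _)

theorem ballCutoff_le_one (v : E) : ballCutoff ε v ≤ 1 := sub_le_self _ (radialStep_nonneg _)

theorem ballCutoff_eq_zero_of_one_add_lt_norm (hε : 0 < ε) {v : E} (hv : 1 + ε < ‖v‖) :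
    ballCutoff ε v = 0 :=
  ballCutoff_of_one_add_le hε (by nlinarith)

theorem hasCompactSupport_ballCutoff [ProperSpace E] (hε : 0 < ε) :
    HasCompactSupport (ballCutoff (E := E) ε) :=
  HasCompactSupport.intro (isCompact_closedBall 0 (1 + ε)) fun v hv ↦
    ballCutoff_eq_zero_of_one_add_lt_norm hε (by simpa using hv)

theorem hasCompactSupport_deriv_radialStep_norm_sq [ProperSpace E] (hε : 0 < ε) :
    HasCompactSupport fun v : E ↦ deriv (radialStep ε) (‖v‖ ^ 2) :=
  HasCompactSupport.intro (isCompact_closedBall 0 (1 + ε)) fun v hv ↦ by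
    by_contra h
    have := (mem_Icc_of_deriv_radialStep_ne_zero hε h).2
    rw [mem_closedBall, dist_zero_right, not_le] at hv
    nlinarith

variable [InnerProductSpace ℝ E]

theorem contDiff_ballCutoff {k : ℕ∞} : ContDiff ℝ k (ballCutoff (E := E) ε) :=
  contDiff_const.sub (contDiff_radialStep.comp (contDiff_norm_sq ℝ))

theorem fderiv_ballCutoff_apply (v e : E) :
    fderiv ℝ (ballCutoff ε) v e = -(2 * deriv (radialStep ε) (‖v‖ ^ 2) * ⟪v, e⟫) := by
  have hd := (contDiff_radialStep (ε := ε) (k := 1)).differentiable one_ne_zero (‖v‖ ^ 2)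
  have : HasFDerivAt (ballCutoff ε)
      (-(deriv (radialStep ε) (‖v‖ ^ 2) • 2 • innerSL ℝ v)) v :=
    ((hd.hasDerivAt.comp_hasFDerivAt v (hasStrictFDerivAt_norm_sq v).hasFDerivAt).const_sub 1 :)
  rw [this.fderiv]
  simp only [neg_apply, smul_apply, innerSL_apply_apply, nsmul_eq_mul,
    Nat.cast_ofNat, smul_eq_mul, neg_inj]
  ring

end BallCutoff

section Polar

open Measure

theorem comp_smul_eq_comp_homeomorphUnitSphereProd_symm {E F : Type*} [NormedAddCommGroup E]
    [NormedSpace ℝ E] (h : E → F) :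
    (fun p : sphere (0 : E) 1 × Ioi (0 : ℝ) ↦ h ((p.2 : ℝ) • (p.1 : E))) =
      (fun x : ({0}ᶜ : Set E) ↦ h x) ∘ (homeomorphUnitSphereProd E).symm := by
  ext p
  simp

theorem integral_volumeIoiPow {F : Type*} [NormedAddCommGroup F] [NormedSpace ℝ F] (m : ℕ)
    (h : ℝ → F) :
    ∫ r, h r ∂volumeIoiPow m = ∫ r in Ioi 0, r ^ m • h r := by
  rw [volumeIoiPow, integral_withDensity_eq_integral_toReal_smul
      (measurable_subtype_coe.pow_const m).ennreal_ofReal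
      (.of_forall fun _ ↦ ENNReal.ofReal_lt_top),
    integral_subtype_comap measurableSet_Ioi fun r ↦ (ENNReal.ofReal (r ^ m)).toReal • h r]
  refine setIntegral_congr_fun measurableSet_Ioi fun r hr ↦ ?_
  rw [ENNReal.toReal_ofReal (pow_nonneg (le_of_lt hr) m)]

variable {E F : Type*} [NormedAddCommGroup E] [NormedSpace ℝ E] [FiniteDimensional ℝ E]
  [MeasurableSpace E] [BorelSpace E] (μ : Measure E) [μ.IsAddHaarMeasure] [NormedAddCommGroup F]

theorem integrable_toSphere_prod {h : E → F} (hh : Integrable h μ) :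
    Integrable (fun p : sphere (0 : E) 1 × Ioi (0 : ℝ) ↦ h ((p.2 : ℝ) • (p.1 : E)))
      (μ.toSphere.prod (volumeIoiPow (finrank ℝ E - 1))) := by
  rw [comp_smul_eq_comp_homeomorphUnitSphereProd_symm,
    ← (μ.measurePreserving_homeomorphUnitSphereProd).integrable_comp_emb
      (homeomorphUnitSphereProd E).measurableEmbedding,
    Function.comp_assoc, Homeomorph.symm_comp_self, Function.comp_id]
  exact (integrableOn_iff_comap_subtypeVal (measurableSet_singleton 0).compl).1 hh.integrableOn

variable [NormedSpace ℝ F]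

theorem integrable_toSphere_integral_Ioi {h : E → F} (hh : Integrable h μ) :
    Integrable (fun u : sphere (0 : E) 1 ↦
      ∫ r in Ioi (0 : ℝ), r ^ (finrank ℝ E - 1) • h (r • (u : E))) μ.toSphere := by
  convert (integrable_toSphere_prod μ hh).integral_prod_left using 2 with u
  exact (integral_volumeIoiPow _ fun r ↦ h (r • (u : E))).symm

variable [Nontrivial E]

theorem integral_eq_integral_toSphere_prod (h : E → F) :
    ∫ x, h x ∂μ = ∫ p : sphere (0 : E) 1 × Ioi (0 : ℝ), h ((p.2 : ℝ) • (p.1 : E))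
      ∂μ.toSphere.prod (volumeIoiPow (finrank ℝ E - 1)) := by
  rw [comp_smul_eq_comp_homeomorphUnitSphereProd_symm,
    ← (μ.measurePreserving_homeomorphUnitSphereProd).integral_comp
      (homeomorphUnitSphereProd E).measurableEmbedding]
  simp only [Function.comp_apply, Homeomorph.symm_apply_apply]
  rw [integral_subtype_comap (measurableSet_singleton 0).compl, restrict_compl_singleton]

theorem integral_eq_integral_toSphere_integral_Ioi {h : E → F} (hh : Integrable h μ) :
    ∫ x, h x ∂μ = ∫ u : sphere (0 : E) 1,
      (∫ r in Ioi (0 : ℝ), r ^ (finrank ℝ E - 1) • h (r • (u : E))) ∂μ.toSphere := by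
  rw [integral_eq_integral_toSphere_prod, integral_prod _ (integrable_toSphere_prod μ hh)]
  exact integral_congr_ae (.of_forall fun u ↦ integral_volumeIoiPow _ fun r ↦ h (r • (u : E)))

end Polar

section DivergenceBall

variable {E : Type*} [NormedAddCommGroup E] [InnerProductSpace ℝ E] [FiniteDimensional ℝ E]
  [MeasurableSpace E] [BorelSpace E] (μ : Measure E)

theorem integral_ballCutoff_mul_fderiv [μ.IsAddHaarMeasure] {ε : ℝ} (hε : 0 < ε) {g : E → ℝ}
    (hg : ContDiff ℝ 1 g) (e : E) :
    ∫ v, ballCutoff ε v * fderiv ℝ g v e ∂μ =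
      ∫ v, 2 * deriv (radialStep ε) (‖v‖ ^ 2) * ⟪v, e⟫ * g v ∂μ := by
  have hχ := hasCompactSupport_ballCutoff (E := E) hε
  have hχ' : ContDiff ℝ 1 (ballCutoff (E := E) ε) := contDiff_ballCutoff
  rw [integral_mul_fderiv_eq_neg_fderiv_mul_of_integrable
    ((hχ'.continuous_fderiv_apply one_ne_zero |>.comp (continuous_id.prodMk continuous_const)).mul
      hg.continuous |>.integrable_of_hasCompactSupport (hχ.fderiv_apply ℝ e).mul_right)
    (hχ'.continuous.mul (hg.continuous_fderiv_apply one_ne_zero |>.comp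
      (continuous_id.prodMk continuous_const)) |>.integrable_of_hasCompactSupport hχ.mul_right)
    (hχ'.continuous.mul hg.continuous |>.integrable_of_hasCompactSupport hχ.mul_right)
    (fun v _ ↦ hχ'.differentiable one_ne_zero v) (fun v _ ↦ hg.differentiable one_ne_zero v),
    ← integral_neg]
  simp_rw [fderiv_ballCutoff_apply, neg_mul, neg_neg]

theorem tendsto_integral_ballCutoff_mul [IsFiniteMeasureOnCompacts μ] {h : E → ℝ}
    (hh : Continuous h) :
    Tendsto (fun ε ↦ ∫ v, ballCutoff ε v * h v ∂μ) (𝓝[>] 0)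
      (𝓝 (∫ v in closedBall 0 1, h v ∂μ)) := by
  rw [← integral_indicator measurableSet_closedBall]
  refine tendsto_integral_filter_of_dominated_convergence
    ((closedBall (0 : E) 2).indicator fun v ↦ ‖h v‖) ?_ ?_ ?_ ?_
  · exact Eventually.of_forall fun ε ↦
      (contDiff_ballCutoff (k := 0).continuous.mul hh).aestronglyMeasurable
  · filter_upwards [Ioo_mem_nhdsGT one_pos] with ε ⟨hε, hε1⟩
    refine Eventually.of_forall fun v ↦ ?_
    by_cases hv : v ∈ closedBall (0 : E) 2
    · rw [indicator_of_mem hv, norm_mul, Real.norm_of_nonneg (ballCutoff_nonneg v)]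
      exact mul_le_of_le_one_left (norm_nonneg _) (ballCutoff_le_one v)
    · rw [mem_closedBall, dist_zero_right, not_le] at hv
      rw [ballCutoff_eq_zero_of_one_add_lt_norm hε (by linarith), zero_mul, norm_zero]
      exact indicator_nonneg (fun _ _ ↦ norm_nonneg _) _
  · exact (hh.norm.continuousOn.integrableOn_compact (isCompact_closedBall 0 2))
      |>.integrable_indicator measurableSet_closedBall
  · refine Eventually.of_forall fun v ↦ ?_
    by_cases hv : ‖v‖ ≤ 1
    · rw [indicator_of_mem (by simpa using hv)]
      refine tendsto_const_nhds.congr' ?_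
      filter_upwards [self_mem_nhdsWithin] with ε hε
      rw [ballCutoff_of_norm_le_one (le_of_lt hε) hv, one_mul]
    · rw [indicator_of_notMem (by simpa using hv)]
      refine tendsto_const_nhds.congr' ?_
      filter_upwards [Ioo_mem_nhdsGT (show (0 : ℝ) < ‖v‖ ^ 2 - 1 by nlinarith)] with ε ⟨hε, hεv⟩
      rw [ballCutoff_of_one_add_le hε (by linarith), zero_mul]

theorem integrable_deriv_radialStep_mul [IsFiniteMeasureOnCompacts μ] {ε : ℝ} (hε : 0 < ε)
    {g : E → ℝ} (hg : Continuous g) (e : E) :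
    Integrable (fun v ↦ 2 * deriv (radialStep ε) (‖v‖ ^ 2) * ⟪v, e⟫ * g v) μ :=
  Continuous.integrable_of_hasCompactSupport
    (by have := continuous_deriv_radialStep (ε := ε); fun_prop)
    (hasCompactSupport_deriv_radialStep_norm_sq hε).mul_left.mul_right.mul_right

variable [μ.IsAddHaarMeasure] [Nontrivial E]

theorem tendsto_integral_deriv_radialStep_mul {g : E → ℝ} (hg : Continuous g) (e : E) :
    Tendsto (fun ε ↦ ∫ v, 2 * deriv (radialStep ε) (‖v‖ ^ 2) * ⟪v, e⟫ * g v ∂μ) (𝓝[>] 0)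
      (𝓝 (∫ u : sphere (0 : E) 1, g u * ⟪(u : E), e⟫ ∂μ.toSphere)) := by
  let Q (u : sphere (0 : E) 1) (r : ℝ) : ℝ :=
    r ^ (finrank ℝ E - 1) * (g (r • (u : E)) * ⟪(u : E), e⟫)
  have hQ : Continuous fun p : sphere (0 : E) 1 × ℝ ↦ Q p.1 p.2 := by fun_prop
  obtain ⟨C, hC⟩ := (isCompact_univ.prod isCompact_Icc).exists_bound_of_continuousOn
    (s := univ ×ˢ Icc (1 : ℝ) 2) hQ.continuousOn
  have hpolar (ε : ℝ) (u : sphere (0 : E) 1) :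
      (fun r : ℝ ↦ r ^ (finrank ℝ E - 1) • (2 * deriv (radialStep ε) (‖r • (u : E)‖ ^ 2) *
        ⟪r • (u : E), e⟫ * g (r • (u : E)))) = fun r ↦ radialWeight ε r * Q u r := by
    ext r
    simp only [Q, radialWeight, norm_smul, norm_eq_of_mem_sphere u, Real.norm_eq_abs, mul_one,
      sq_abs, real_inner_smul_left, smul_eq_mul]
    ring
  have hB : ∀ ε > 0, ∫ v, 2 * deriv (radialStep ε) (‖v‖ ^ 2) * ⟪v, e⟫ * g v ∂μ =
      ∫ u : sphere (0 : E) 1, (∫ r in Ioi (0 : ℝ), radialWeight ε r * Q u r) ∂μ.toSphere :=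
    fun ε hε ↦ by
      simp only [integral_eq_integral_toSphere_integral_Ioi μ
        (integrable_deriv_radialStep_mul μ hε hg e), hpolar]
  refine Tendsto.congr' (eventuallyEq_nhdsWithin_of_eqOn fun ε hε ↦ (hB ε hε).symm) ?_
  refine tendsto_integral_filter_of_dominated_convergence (fun _ ↦ C) ?_ ?_ (integrable_const C) ?_
  · refine eventually_nhdsWithin_of_forall fun ε hε ↦ ?_
    simpa only [hpolar] using (integrable_toSphere_integral_Ioi μ
      (integrable_deriv_radialStep_mul μ hε hg e)).aestronglyMeasurable
  · filter_upwards [Ioo_mem_nhdsGT one_pos] with ε ⟨hε, hε1⟩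
    refine .of_forall fun u ↦ ?_
    simpa using abs_setIntegral_radialWeight_mul_sub_le hε (hQ.comp (Continuous.prodMk_right u))
      (c := 0) fun r hr ↦ by simpa using hC (u, r) ⟨mem_univ _, hr.1, by linarith [hr.2]⟩
  · refine .of_forall fun u ↦ ?_
    simpa [Q] using tendsto_setIntegral_radialWeight_mul (hQ.comp (Continuous.prodMk_right u))

theorem integral_closedBall_fderiv_apply {g : E → ℝ} (hg : ContDiff ℝ 1 g) (e : E) :
    ∫ v in closedBall 0 1, fderiv ℝ g v e ∂μ =
      ∫ u : sphere (0 : E) 1, g u * ⟪(u : E), e⟫ ∂μ.toSphere :=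
  tendsto_nhds_unique
    ((tendsto_integral_ballCutoff_mul μ (hg.continuous_fderiv_apply one_ne_zero |>.comp
      (continuous_id.prodMk continuous_const))).congr'
      (eventuallyEq_nhdsWithin_of_eqOn (s := Ioi 0) fun _ hε ↦
        integral_ballCutoff_mul_fderiv μ hε hg e))
    (tendsto_integral_deriv_radialStep_mul μ hg.continuous e)

theorem integral_closedBall_fderiv_add_smul_apply {f : E → ℝ} (hf : ContDiff ℝ 1 f) (x e : E)
    {δ : ℝ} (hδ : δ ≠ 0) :
    ∫ v in closedBall 0 1, fderiv ℝ f (x + δ • v) e ∂μ =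
      δ⁻¹ * ∫ u : sphere (0 : E) 1, f (x + δ • (u : E)) * ⟪(u : E), e⟫ ∂μ.toSphere := by
  have hg : ContDiff ℝ 1 fun v ↦ f (x + δ • v) :=
    hf.comp (contDiff_const.add (contDiff_const_smul δ))
  have hfderiv (v : E) : fderiv ℝ (fun v ↦ f (x + δ • v)) v e = δ * fderiv ℝ f (x + δ • v) e := by
    have : HasFDerivAt (fun v ↦ f (x + δ • v)) ((fderiv ℝ f (x + δ • v)).comp (δ • .id ℝ E)) v :=
      (hf.differentiable one_ne_zero _).hasFDerivAt.comp v
        (((hasFDerivAt_id v).const_smul δ).const_add x)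
    simp [this.fderiv]
  rw [← integral_closedBall_fderiv_apply μ hg e, ← integral_const_mul]
  simp_rw [hfderiv, inv_mul_cancel_left₀ hδ]

end DivergenceBall

theorem hasFDerivAt_integral_comp_add_smul {E F : Type*} [NormedAddCommGroup E]
    [NormedSpace ℝ E] [FiniteDimensional ℝ E] [MeasurableSpace E] [BorelSpace E]
    [NormedAddCommGroup F] [NormedSpace ℝ F] {μ : Measure E} [IsFiniteMeasureOnCompacts μ]
    {f : E → F} (hf : ContDiff ℝ 1 f) {K : Set E} (hK : IsCompact K) (δ : ℝ) (x : E) :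
    HasFDerivAt (fun y ↦ ∫ v in K, f (y + δ • v) ∂μ) (∫ v in K, fderiv ℝ f (x + δ • v) ∂μ) x := by
  have hf' : Continuous (fderiv ℝ f) := hf.continuous_fderiv one_ne_zero
  obtain ⟨M, hM⟩ := ((isCompact_closedBall x 1).add (hK.smul δ)).exists_bound_of_continuousOn
    hf'.continuousOn
  refine hasFDerivAt_integral_of_dominated_of_fderiv_le (𝕜 := ℝ) (ball_mem_nhds x one_pos)
    (F' := fun y v ↦ fderiv ℝ f (y + δ • v)) (bound := fun _ ↦ M) (.of_forall fun y ↦ ?_) ?_ ?_ ?_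
    (integrableOn_const (hK.measure_lt_top (μ := μ)).ne) ?_
  · exact (hf.continuous.comp (continuous_const_add y |>.comp (continuous_const_smul δ)))
      |>.aestronglyMeasurable
  · exact (hf.continuous.comp (continuous_const_add x |>.comp (continuous_const_smul δ)))
      |>.continuousOn.integrableOn_compact hK
  · exact (hf'.comp (continuous_const_add x |>.comp (continuous_const_smul δ))).aestronglyMeasurable
  · filter_upwards [ae_restrict_mem hK.measurableSet] with v hv y hy
    exact hM _ (add_mem_add (ball_subset_closedBall hy) (smul_mem_smul_set hv))
  · exact .of_forall fun v y _ ↦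
      (hasFDerivAt_comp_add_right _).2 (hf.differentiable one_ne_zero _).hasFDerivAt

theorem stmt_14 (n : ℕ) (hn : 0 < n)
    (f : EuclideanSpace ℝ (Fin n) → ℝ) (hf : ContDiff ℝ 1 f)
    (δ : ℝ) (hδ : 0 < δ)
    (fhat : EuclideanSpace ℝ (Fin n) → ℝ)
    (hfhat : ∀ x, fhat x =
      (volume (Metric.closedBall (0 : EuclideanSpace ℝ (Fin n)) 1)).toReal⁻¹ *
        ∫ v in Metric.closedBall (0 : EuclideanSpace ℝ (Fin n)) 1, f (x + δ • v))
    (x : EuclideanSpace ℝ (Fin n)) :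
    HasGradientAt fhat
      ((((volume : Measure (EuclideanSpace ℝ (Fin n))).toSphere Set.univ).toReal⁻¹ : ℝ) •
        ∫ u : Metric.sphere (0 : EuclideanSpace ℝ (Fin n)) 1,
          (((n : ℝ) / δ) * f (x + δ • (u : EuclideanSpace ℝ (Fin n)))) •
            (u : EuclideanSpace ℝ (Fin n))
          ∂((volume : Measure (EuclideanSpace ℝ (Fin n))).toSphere)) x := by
  have : Nonempty (Fin n) := ⟨⟨0, hn⟩⟩
  have hσ : ((volume : Measure (EuclideanSpace ℝ (Fin n))).toSphere univ).toReal =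
      n * (volume (closedBall (0 : EuclideanSpace ℝ (Fin n)) 1)).toReal := by
    rw [Measure.toSphere_apply_univ, finrank_euclideanSpace_fin, ENNReal.toReal_mul,
      Measure.addHaar_closedBall_eq_addHaar_ball, ENNReal.toReal_natCast]
  have hcont : Continuous fun u : sphere (0 : EuclideanSpace ℝ (Fin n)) 1 ↦
      ((n : ℝ) / δ * f (x + δ • (u : EuclideanSpace ℝ (Fin n)))) •
        (u : EuclideanSpace ℝ (Fin n)) := by
    have := hf.continuous; fun_prop
  rw [funext hfhat, hasGradientAt_iff_hasFDerivAt]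
  refine ((hasFDerivAt_integral_comp_add_smul hf (isCompact_closedBall 0 1) δ x).const_mul
    _).congr_fderiv ?_
  ext e
  have hint : IntegrableOn (fun v ↦ fderiv ℝ f (x + δ • v)) (closedBall 0 1) :=
    (hf.continuous_fderiv one_ne_zero).comp (continuous_const.add (continuous_const_smul δ))
      |>.continuousOn.integrableOn_compact (isCompact_closedBall 0 1)
  rw [smul_apply, ContinuousLinearMap.integral_apply hint,
    integral_closedBall_fderiv_add_smul_apply _ hf x e hδ.ne', InnerProductSpace.toDual_apply_apply,
    real_inner_smul_left, real_inner_comm, ← integral_inner (hcont.integrable_of_hasCompactSupport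
      (HasCompactSupport.of_compactSpace _)), hσ]
  simp_rw [real_inner_smul_right, real_inner_comm e, mul_assoc, integral_const_mul, smul_eq_mul]
  field_simp
end
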